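/- arXiv:1801.04381 — 2 statements merged into one kernel-verified Lean document; each statement's English description precedes it below -/
import Mathlib

section
/- Let S(X) = {ReLU(x) : x ∈ X} for X ⊆ ℝⁿ, where ReLU acts coordinatewise as max(0,·). If S(X) has nonzero n-dimensional Lebesgue measure (volume), then the interior of S(X) is contained in X. -/
open MeasureTheory

/-- Coordinatewise ReLU on `ℝⁿ`. -/
noncomputable def relu {n : ℕ} (x : Fin n → ℝ) : Fin n → ℝ := fun i => max 0 (x i)

/-!
Every point of `relu '' X` has nonnegative coordinates, and the interior of the nonnegative
orthant is the open positive orthant, so an interior point `y = relu x` has `relu x i > 0` for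
all `i`. A coordinate where `max 0 (x i)` is positive equals `x i`, hence `y = x ∈ X`.
-/

open Set

lemma relu_mem_pi_Ici {n : ℕ} (x : Fin n → ℝ) : relu x ∈ univ.pi fun _ => Ici 0 :=
  fun i _ => le_max_left 0 (x i)

lemma relu_eq_self_of_pos {n : ℕ} {x : Fin n → ℝ} (h : ∀ i, 0 < relu x i) : relu x = x :=
  funext fun i => max_eq_right ((lt_max_iff.1 (h i)).resolve_left (lt_irrefl 0)).le

lemma interior_relu_image_subset_pi_Ioi {n : ℕ} (X : Set (Fin n → ℝ)) :
    interior (relu '' X) ⊆ univ.pi fun _ => Ioi 0 :=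
  calc interior (relu '' X) ⊆ interior (univ.pi fun _ => Ici 0) :=
        interior_mono <| image_subset_iff.2 fun x _ => relu_mem_pi_Ici x
    _ = univ.pi fun _ => Ioi 0 := by simp only [interior_pi_set finite_univ, interior_Ici]

theorem interior_relu_image_subset_general {n : ℕ} (X : Set (Fin n → ℝ)) :
    interior (relu '' X) ⊆ X := by
  intro y hy
  obtain ⟨x, hx, rfl⟩ := interior_subset hy
  have hpos : ∀ i, 0 < relu x i := fun i => interior_relu_image_subset_pi_Ioi X hy i (mem_univ i)
  rwa [relu_eq_self_of_pos hpos]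

/-- If `S(X) = relu '' X` has nonzero Lebesgue measure, then `interior (S X) ⊆ X`. -/
theorem interior_relu_image_subset {n : ℕ} (X : Set (Fin n → ℝ))
    (h : volume (relu '' X) ≠ 0) : interior (relu '' X) ⊆ X :=
  interior_relu_image_subset_general X
end

section
/- For a single quadrant: if p is a distribution on m × n matrices invariant under left multiplication by diagonal ±1 matrices, and μ is a finite measure on ℝⁿ such that for p-a.e. B the set {x : (Bx)_i = 0 for some i} is μ-null, then for every sign vector σ ∈ {−1,+1}ᵐ, E_B[μ({x : Bx ∈ Q_σ})] = μ(ℝⁿ)/2^m. -/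
open MeasureTheory

/-- The sign `±1` associated with a boolean. -/
def sgn (b : Bool) : ℝ := if b then 1 else -1

/-- The open quadrant `Q_σ` of a sign vector `σ` (encoded as `Fin m → Bool`). -/
def quadrant {m : ℕ} (σ : Fin m → Bool) : Set (Fin m → ℝ) :=
  {x | ∀ i, 0 < sgn (σ i) * x i}

/-!
The sign flips `B ↦ diag(sgn σ') B` act transitively on the quadrants, `DBx ∈ Q_τ` iff
`Bx ∈ Q_{τσ'}`, so by the invariance of `p` all `2^m` expectations `E_B[μ {x : Bx ∈ Q_τ}]`
coincide. Their sum is `μ(ℝⁿ)`, because for a.e. `B` the sets `{x : Bx ∈ Q_τ}` partition `ℝⁿ`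
up to the `μ`-null set where some coordinate of `Bx` vanishes.
-/

lemma sgn_mul_sgn (a b : Bool) : sgn a * sgn b = sgn (a == b) := by
  cases a <;> cases b <;> norm_num [sgn]

section Quadrant

variable {m : ℕ}

lemma isOpen_quadrant (σ : Fin m → Bool) : IsOpen (quadrant σ) := by
  simp only [quadrant, Set.ofPred_forall]
  exact isOpen_iInter_of_finite fun i => isOpen_lt continuous_const (by fun_prop)

lemma measurableSet_quadrant (σ : Fin m → Bool) : MeasurableSet (quadrant σ) :=
  (isOpen_quadrant σ).measurableSet

lemma pairwise_disjoint_quadrant : Pairwise (Function.onFun Disjoint (quadrant (m := m))) := by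
  intro σ τ hne
  obtain ⟨i, hi⟩ := Function.ne_iff.mp hne
  refine Set.disjoint_left.mpr fun y hσ hτ => ?_
  have hσi := hσ i
  have hτi := hτ i
  cases hσ' : σ i <;> cases hτ' : τ i <;> simp_all [sgn] <;> linarith

lemma iUnion_quadrant : ⋃ σ : Fin m → Bool, quadrant σ = {y | ∀ i, y i ≠ 0} := by
  ext y
  simp only [Set.mem_iUnion, Set.mem_ofPred_eq, quadrant]
  constructor
  · rintro ⟨σ, hσ⟩ i hi
    simpa [hi] using hσ i
  · intro hy
    refine ⟨fun i => decide (0 < y i), fun i => ?_⟩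
    rcases (hy i).lt_or_gt with hneg | hpos
    · simp [sgn, not_lt.mpr hneg.le, hneg]
    · simp [sgn, hpos]

lemma mem_quadrant_sgn_mul (σ τ : Fin m → Bool) (y : Fin m → ℝ) :
    (fun i => sgn (σ i) * y i) ∈ quadrant τ ↔ y ∈ quadrant (fun i => τ i == σ i) := by
  simp only [quadrant, Set.mem_ofPred_eq, ← mul_assoc, sgn_mul_sgn]

lemma sum_measure_preimage_quadrant {α : Type*} [MeasurableSpace α] (μ : Measure α)
    {f : α → Fin m → ℝ} (hf : Measurable f) (hzero : μ {x | ∃ i, f x i = 0} = 0) :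
    ∑ σ, μ (f ⁻¹' quadrant σ) = μ Set.univ := by
  have hdisj : Pairwise (Function.onFun Disjoint fun σ => f ⁻¹' quadrant σ) :=
    fun σ τ hne => (pairwise_disjoint_quadrant hne).preimage f
  rw [← tsum_fintype (L := .unconditional _),
    ← measure_iUnion hdisj fun σ => hf (measurableSet_quadrant σ),
    ← Set.preimage_iUnion, iUnion_quadrant]
  refine measure_congr (ae_eq_univ.mpr ?_)
  simpa [Set.compl_ofPred] using hzero

end Quadrant

section SignFlip

variable {m n : ℕ}

def signFlip (σ : Fin m → Bool) (B : Fin m → Fin n → ℝ) : Fin m → Fin n → ℝ :=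
  fun i j => sgn (σ i) * B i j

lemma measurable_signFlip (σ : Fin m → Bool) : Measurable (signFlip (n := n) σ) := by
  unfold signFlip; fun_prop

def quadrantMass (μ : Measure (Fin n → ℝ)) (B : Fin m → Fin n → ℝ) (σ : Fin m → Bool) :
    ENNReal :=
  μ {x | (fun i => ∑ j, B i j * x j) ∈ quadrant σ}

lemma measurable_quadrantMass (μ : Measure (Fin n → ℝ)) [SFinite μ] (σ : Fin m → Bool) :
    Measurable fun B : Fin m → Fin n → ℝ => quadrantMass μ B σ := by
  have hcont : Continuous fun q : (Fin m → Fin n → ℝ) × (Fin n → ℝ) =>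
      fun i => ∑ j, q.1 i j * q.2 j := by fun_prop
  exact measurable_measure_prodMk_left (hcont.measurable (measurableSet_quadrant σ))

lemma quadrantMass_signFlip (μ : Measure (Fin n → ℝ)) (B : Fin m → Fin n → ℝ)
    (σ τ : Fin m → Bool) :
    quadrantMass μ (signFlip σ B) τ = quadrantMass μ B (fun i => τ i == σ i) := by
  simp only [quadrantMass, signFlip, mul_assoc, ← Finset.mul_sum, mem_quadrant_sgn_mul]

lemma sum_quadrantMass (μ : Measure (Fin n → ℝ)) {B : Fin m → Fin n → ℝ}
    (hB : μ {x | ∃ i, ∑ j, B i j * x j = 0} = 0) :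
    ∑ σ, quadrantMass μ B σ = μ Set.univ :=
  sum_measure_preimage_quadrant μ (by fun_prop) hB

lemma lintegral_quadrantMass_eq (μ : Measure (Fin n → ℝ)) [SFinite μ]
    {p : Measure (Fin m → Fin n → ℝ)} (hp : ∀ σ, p.map (signFlip σ) = p) (σ τ : Fin m → Bool) :
    ∫⁻ B, quadrantMass μ B σ ∂p = ∫⁻ B, quadrantMass μ B τ ∂p := by
  have hflip : (fun i => σ i == (σ i == τ i)) = τ := by
    funext i; cases σ i <;> cases τ i <;> rfl
  calc ∫⁻ B, quadrantMass μ B σ ∂p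
      = ∫⁻ B, quadrantMass μ B σ ∂(p.map (signFlip fun i => σ i == τ i)) := by rw [hp]
    _ = ∫⁻ B, quadrantMass μ B τ ∂p := by
      rw [lintegral_map (measurable_quadrantMass μ σ) (measurable_signFlip _)]
      simp only [quadrantMass_signFlip, hflip]

end SignFlip

/-- Single-quadrant version: if `p` is a distribution on `m × n` matrices invariant
under left multiplication by diagonal `±1` matrices and for `p`-a.e. `B` the set
where `Bx` has a zero coordinate is `μ`-null, then for every sign vector `σ`,
`E_B[μ {x : Bx ∈ Q_σ}] = μ(ℝⁿ)/2^m`. -/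
theorem expected_measure_single_quadrant {m n : ℕ}
    (μ : Measure (Fin n → ℝ)) [IsFiniteMeasure μ]
    (p : Measure (Fin m → Fin n → ℝ)) [IsProbabilityMeasure p]
    (hsym : ∀ σ : Fin m → Bool,
      Measure.map (fun B : Fin m → Fin n → ℝ => fun i j => sgn (σ i) * B i j) p = p)
    (hgen : ∀ᵐ B ∂p, μ {x : Fin n → ℝ | ∃ i, (∑ j, B i j * x j) = 0} = 0)
    (σ : Fin m → Bool) :
    ∫⁻ B, μ {x : Fin n → ℝ | (fun i => ∑ j, B i j * x j) ∈ quadrant σ} ∂p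
      = μ Set.univ / 2 ^ m := by
  change ∫⁻ B, quadrantMass μ B σ ∂p = μ Set.univ / 2 ^ m
  have htotal : ∑ τ, ∫⁻ B, quadrantMass μ B τ ∂p = μ Set.univ := by
    rw [← lintegral_finsetSum _ fun τ _ => measurable_quadrantMass μ τ,
      lintegral_congr_ae (hgen.mono fun B hB => sum_quadrantMass μ hB)]
    simp
  have hequal (τ) : ∫⁻ B, quadrantMass μ B τ ∂p = ∫⁻ B, quadrantMass μ B σ ∂p :=
    lintegral_quadrantMass_eq μ hsym τ σ
  simp only [hequal, Finset.sum_const, Finset.card_univ, Fintype.card_fun, Fintype.card_bool,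
    Fintype.card_fin, nsmul_eq_mul, Nat.cast_pow, Nat.cast_ofNat] at htotal
  rw [ENNReal.eq_div_iff (by positivity) (by simp)]
  exact htotal
end
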